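/- The least fixed point of C is reached by finitely many iterations from the empty set: for every preference default theory form : ι → L.Sentence there exists n : ℕ such that the n-fold iterate C^[n](∅) equals lfp(C) (this uses that Ext takes only finitely many values, since there are only finitely many linear orders on the finite type ι and hence finitely many extensions). -/
import Mathlib


open FirstOrder Language

namespace Brevis

/-- The base language with a single binary relation symbol `R`. -/
def baseLang : Language where
  Functions := fun _ => Empty
  Relations := fun n => match n with
    | 2 => Unit
    | _ => Empty

/-- The binary relation symbol `R` of `baseLang`. -/
def Rsym : baseLang.Relations 2 := Unit.unit

/-- The base language with a binary relation symbol `R` and one 0-ary relation symbol `P`. -/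
def baseLangP : Language where
  Functions := fun _ => Empty
  Relations := fun n => match n with
    | 0 => Unit
    | 2 => Unit
    | _ => Empty

/-- The binary relation symbol `R` of `baseLangP`. -/
def RsymP : baseLangP.Relations 2 := Unit.unit

/-- The 0-ary relation symbol `P` of `baseLangP`. -/
def Psym : baseLangP.Relations 0 := Unit.unit

/-- The atomic sentence `p` given by the propositional symbol `P`. -/
def pSent (ι : Type) : (baseLangP[[ι]]).Sentence :=
  Relations.formula (Sum.inl Psym) ![]

variable (L₀ : FirstOrder.Language.{0, 0}) (R : L₀.Relations 2) (ι : Type) [Fintype ι]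

/-- The atomic sentence `d < d'`, i.e. `R (c_d) (c_d')`. -/
def ltSent (d d' : ι) : (L₀[[ι]]).Sentence :=
  Relations.boundedFormula₂ (Sum.inl R) (L₀.con d).term (L₀.con d').term

/-- The theory `SPO` asserting that `R` is a strict partial order (irreflexive and transitive). -/
def spo : (L₀[[ι]]).Theory :=
  {Relations.irreflexive (Sum.inl R), Relations.transitive (Sum.inl R)}

/-- A set of sentences is consistent iff together with `SPO` it is satisfiable. -/
def Consistent (S : (L₀[[ι]]).Theory) : Prop :=
  Theory.IsSatisfiable (S ∪ spo L₀ R ι)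

open scoped Classical in
/-- The extension base `B(e)` determined by the linear order `e` on the names. -/
noncomputable def base (e : LinearOrder ι) (form : ι → (L₀[[ι]]).Sentence) :
    (L₀[[ι]]).Theory :=
  letI := e
  (Finset.univ.sort (· ≤ · : ι → ι → Prop)).foldl
    (fun B d => if Consistent L₀ R ι (B ∪ {form d}) then B ∪ {form d} else B) ∅

/-- The deductive closure (modulo `SPO`) of a set of sentences:
all sentences satisfied in every model of `S ∪ SPO`. -/
def closure (S : (L₀[[ι]]).Theory) : Set (L₀[[ι]]).Sentence :=
  {φ | (S ∪ spo L₀ R ι) ⊨ᵇ φ}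

/-- The extension `E(e)` generated by the linear order `e`. -/
noncomputable def extension (e : LinearOrder ι) (form : ι → (L₀[[ι]]).Sentence) :
    Set (L₀[[ι]]).Sentence :=
  closure L₀ R ι (base L₀ R ι e form)

/-- A strict partial order `p` on the names is compatible with `S` iff
`S ∪ SPO ∪ {d < d' | p d d'} ∪ {¬ (d < d') | ¬ p d d'}` is satisfiable. -/
def Compatible (p : ι → ι → Prop) (S : (L₀[[ι]]).Theory) : Prop :=
  Theory.IsSatisfiable
    (S ∪ spo L₀ R ι ∪ {φ | ∃ d d', p d d' ∧ φ = ltSent L₀ R ι d d'} ∪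
      {φ | ∃ d d', ¬ p d d' ∧ φ = ∼(ltSent L₀ R ι d d')})

/-- `Exts form S`: the set of extensions `E(e)` where `e` is a linear order extending some
strict partial order compatible with `S`. -/
def Exts (form : ι → (L₀[[ι]]).Sentence) (S : (L₀[[ι]]).Theory) :
    Set (Set (L₀[[ι]]).Sentence) :=
  {E | ∃ (e : LinearOrder ι) (p : ι → ι → Prop), IsStrictOrder ι p ∧
    Compatible L₀ R ι p S ∧ (∀ d d', p d d' → e.lt d d') ∧ E = extension L₀ R ι e form}

/-- The operator `C`. -/
def C (form : ι → (L₀[[ι]]).Sentence) (S : (L₀[[ι]]).Theory) : (L₀[[ι]]).Theory :=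
  ⋂₀ Exts L₀ R ι form S

/-- The least fixed point of `C` (Knaster–Tarski): the set of accepted conclusions. -/
def lfpC (form : ι → (L₀[[ι]]).Sentence) : (L₀[[ι]]).Theory :=
  sInf {S | C L₀ R ι form S ⊆ S}


/-- The least fixed point of `C` is reached by finitely many iterations from `∅`. -/
theorem lfp_reached_in_finitely_many_steps (ι : Type) [Fintype ι]
    (form : ι → (baseLang[[ι]]).Sentence) :
    ∃ n : ℕ, (C baseLang Rsym ι form)^[n] ∅ = lfpC baseLang Rsym ι form := by
  classical
  -- C is monotone
  have hmono : Monotone (C baseLang Rsym ι form) := by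
    intro S T hST
    apply Set.sInter_subset_sInter
    rintro E ⟨e, p, hso, hcomp, hext, rfl⟩
    refine ⟨e, p, hso, hcomp.mono ?_, hext, rfl⟩
    apply Set.union_subset_union_left
    apply Set.union_subset_union_left
    exact Set.union_subset_union_left _ hST
  -- finitely many linear orders
  haveI : Finite (LinearOrder ι) := by
    apply Finite.of_injective (fun e : LinearOrder ι => (e.le : ι → ι → Prop))
    intro e₁ e₂ h
    exact LinearOrder.ext fun x y => iff_of_eq (congrFun (congrFun h x) y)
  -- the range of possible extensions is finite
  set E₀ : Set (Set (baseLang[[ι]]).Sentence) :=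
    Set.range (fun e : LinearOrder ι => extension baseLang Rsym ι e form) with hE₀
  have hE₀fin : E₀.Finite := Set.finite_range _
  -- every value of C lies in the finite set V
  set V : Set (Set (baseLang[[ι]]).Sentence) := Set.sInter '' 𝒫 E₀ with hVdef
  have hVfin : V.Finite := Set.Finite.image _ hE₀fin.powerset
  have hmemV : ∀ S, C baseLang Rsym ι form S ∈ V := by
    intro S
    refine ⟨Exts baseLang Rsym ι form S, ?_, rfl⟩
    rintro E ⟨e, p, _, _, _, rfl⟩
    exact ⟨e, rfl⟩
  -- the iterates
  set u : ℕ → (baseLang[[ι]]).Theory := fun n => (C baseLang Rsym ι form)^[n] ∅ with hu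
  have husucc : ∀ n, u (n + 1) = C baseLang Rsym ι form (u n) := by
    intro n; simp [hu, Function.iterate_succ_apply']
  have hstep : ∀ n, u n ⊆ u (n + 1) := by
    intro n
    induction n with
    | zero => exact Set.empty_subset _
    | succ k ih => rw [husucc, husucc]; exact hmono ih
  have humono : Monotone u := monotone_nat_of_le_succ hstep
  -- pigeonhole
  haveI : Finite V := hVfin
  obtain ⟨a, b, hab, heq⟩ := Finite.exists_ne_map_eq_of_infinite
    (fun n : ℕ => (⟨C baseLang Rsym ι form (u n), hmemV (u n)⟩ : V))
  have heq' : u (a + 1) = u (b + 1) := by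
    rw [husucc, husucc]; exact congrArg Subtype.val heq
  clear heq
  -- wlog a < b
  wlog hlt : a < b generalizing a b
  · exact this b a hab.symm heq'.symm (by omega)
  have hfix : C baseLang Rsym ι form (u (a + 1)) = u (a + 1) := by
    rw [← husucc]
    refine subset_antisymm ?_ (hstep _)
    calc u (a + 2) ⊆ u (b + 1) := humono (by omega)
    _ = u (a + 1) := heq'.symm
  refine ⟨a + 1, subset_antisymm ?_ ?_⟩
  · -- u n ⊆ lfpC for all n
    have hpre : C baseLang Rsym ι form (lfpC baseLang Rsym ι form) ⊆
        lfpC baseLang Rsym ι form := by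
      intro x hx
      apply Set.mem_sInter.mpr
      intro S hS
      have h1 : lfpC baseLang Rsym ι form ⊆ S := sInf_le hS
      exact hS (hmono h1 hx)
    have : ∀ n, u n ⊆ lfpC baseLang Rsym ι form := by
      intro n
      induction n with
      | zero => exact Set.empty_subset _
      | succ k ih => rw [husucc]; exact (hmono ih).trans hpre
    exact this (a + 1)
  · exact sInf_le (le_of_eq hfix)

end Brevis
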